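/- Let u be a path in KΔ and z a path lying in Y. If φ_2(z)(ū) ≠ 0, then u is a supplement of z (in the elementary cycle zu). -/

import Mathlib

noncomputable section
open Classical

/-- A quiver, given by a type of vertices and a family of types of arrows. -/
structure QD : Type 1 where
  V : Type
  Ar : V → V → Type

namespace QD

variable {Q : QD}

/-- Oriented paths in a quiver, composed from left to right. -/
inductive Path (Q : QD) : Q.V → Q.V → Type
  | nil (i : Q.V) : Path Q i i
  | cons {i j k : Q.V} (a : Q.Ar i j) (p : Path Q j k) : Path Q i k

namespace Path

/-- Concatenation of paths. -/
def comp : {i j k : Q.V} → Path Q i j → Path Q j k → Path Q i k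
  | _, _, _, nil _, q => q
  | _, _, _, cons a p, q => cons a (comp p q)

/-- Length of a path. -/
def length : {i j : Q.V} → Path Q i j → ℕ
  | _, _, nil _ => 0
  | _, _, cons _ p => length p + 1

end Path

/-- A path bundled with its endpoints. -/
def PathIn (Q : QD) : Type := Σ i : Q.V, Σ j : Q.V, Path Q i j

/-- Bundle a path with its endpoints. -/
def Path.sig {i j : Q.V} (p : Path Q i j) : PathIn Q := ⟨i, j, p⟩

/-- The arrow `a` occurs in the path `p`. -/
def Path.arrowMem {i j : Q.V} (a : Q.Ar i j) : {u v : Q.V} → Path Q u v → Prop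
  | _, _, Path.nil _ => False
  | _, _, @Path.cons _ u u' _ b p =>
      (⟨u, u', b⟩ : Σ i : Q.V, Σ j : Q.V, Q.Ar i j) = ⟨i, j, a⟩ ∨ Path.arrowMem a p

end QD

/-- The path algebra of a quiver over a field `K`, described axiomatically:
an algebra with a basis indexed by the paths, multiplying by concatenation. -/
structure PathAlg (K : Type) [Field K] (Q : QD) [Fintype Q.V] where
  P : Type
  [ringP : Ring P]
  [algP : Algebra K P]
  ι : {i j : Q.V} → Q.Path i j → P
  ι_comp : ∀ {i j k : Q.V} (p : Q.Path i j) (q : Q.Path j k), ι (p.comp q) = ι p * ι q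
  ι_ortho : ∀ {i j k l : Q.V} (p : Q.Path i j) (q : Q.Path k l), j ≠ k → ι p * ι q = 0
  sum_nil : (∑ i : Q.V, ι (QD.Path.nil i)) = 1
  li : LinearIndependent K (fun p : QD.PathIn Q => ι p.2.2)
  span_top : Submodule.span K (Set.range (fun p : QD.PathIn Q => ι p.2.2)) = ⊤

attribute [instance] PathAlg.ringP PathAlg.algP

section Main

variable (K : Type) [Field K] (Q : QD) [Fintype Q.V] [∀ i j : Q.V, Fintype (Q.Ar i j)]
variable (n : ℕ) (PA : PathAlg K Q)

/-- The relation whose `RingQuot` is the truncated quiver algebra `KΔ/R_Δ^n`: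
identify with `0` the image of every path of length at least `n`. -/
def truncRel : PA.P → PA.P → Prop := fun u v =>
  v = 0 ∧ ∃ p : QD.PathIn Q, n ≤ p.2.2.length ∧ u = PA.ι p.2.2

/-- The truncated quiver algebra `A = KΔ/R_Δ^n`. -/
abbrev TA : Type := RingQuot (truncRel K Q n PA)

/-- The class in `A = KΔ/R_Δ^n` of a path of `Δ`. -/
def cls {i j : Q.V} (p : Q.Path i j) : TA K Q n PA :=
  RingQuot.mkAlgHom K (truncRel K Q n PA) (PA.ι p)

/-- Index type for the canonical basis of the truncated algebra: paths of length `< n`. -/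
abbrev Short : Type := {p : QD.PathIn Q // p.2.2.length < n}

/-- The Jacobson radical of the truncated algebra. -/
def JradA : Ideal (TA K Q n PA) := Ideal.jacobson ⊥

/-- The socle of `A` as an `A`-bimodule: the two-sided annihilator of the radical,
viewed as a `K`-subspace. -/
def socA : Submodule K (TA K Q n PA) where
  carrier := {z | ∀ r ∈ JradA K Q n PA, r * z = 0 ∧ z * r = 0}
  add_mem' := by
    intro a b ha hb r hr
    exact ⟨by rw [mul_add, (ha r hr).1, (hb r hr).1, add_zero],
      by rw [add_mul, (ha r hr).2, (hb r hr).2, add_zero]⟩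
  zero_mem' := by intro r hr; simp
  smul_mem' := by
    intro c z hz r hr
    exact ⟨by rw [Algebra.mul_smul_comm, (hz r hr).1, smul_zero],
      by rw [Algebra.smul_mul_assoc, (hz r hr).2, smul_zero]⟩

variable (basA : Module.Basis (Short Q n) K (TA K Q n PA))

/-- The dual-basis functional `p̄^*` attached to a path `p` (zero if `p` is long). -/
def coordP (p : QD.PathIn Q) : Module.Dual K (TA K Q n PA) :=
  if h : p.2.2.length < n then basA.coord ⟨p, h⟩ else 0

variable (s : ℕ) [NeZero s] (w : ZMod s → Q.V) (x : ∀ i : ZMod s, Q.Ar (w i) (w (i + 1)))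

/-- The segment `x_i x_{i+1} ⋯ x_{i+m-1}` of the fixed basic cycle `γ = x_1 ⋯ x_s`. -/
def seg : (i : ZMod s) → (m : ℕ) → Q.Path (w i) (w (i + (m : ZMod s)))
  | i, 0 => cast (congrArg (fun v : ZMod s => Q.Path (w i) (w v)) (by push_cast; ring))
      (QD.Path.nil (w i))
  | i, m + 1 => cast (congrArg (fun v : ZMod s => Q.Path (w i) (w v)) (by push_cast; ring))
      (QD.Path.cons (x i) (seg (i + 1) m))

variable (k : K)

/-- The value `α_r(ā, b̄)` of the `r`-th summand of the `2`-cocycle attached to `γ`. -/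
def aTerm {i j l : Q.V} (a : Q.Path i j) (b : Q.Path j l) (r : ZMod s) :
    Module.Dual K (TA K Q n PA) :=
  if (cls K Q n PA a ≠ 0 ∧ cls K Q n PA b ≠ 0 ∧ n ≤ (a.comp b).length ∧ (a.comp b).length < s ∧
      (a.comp b).sig = (seg Q s w x r (a.comp b).length).sig) then
    coordP K Q n PA basA
      ((seg Q s w x (r + ((a.comp b).length : ZMod s)) (s - (a.comp b).length)).sig)
  else if (cls K Q n PA a ≠ 0 ∧ cls K Q n PA b ≠ 0 ∧ (a.comp b).length = s ∧
      (a.comp b).sig = (seg Q s w x r s).sig) then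
    coordP K Q n PA basA ((QD.Path.nil (w r)).sig)
  else 0

variable (αm : TA K Q n PA →ₗ[K] TA K Q n PA →ₗ[K] Module.Dual K (TA K Q n PA))
variable (t : ℕ) (pM : Fin t → QD.PathIn Q)

/-- The ordinary quiver of the Hochschild extension algebra: the quiver `Δ` together with
one extra arrow `y_{p_m} : t(p_m) → s(p_m)` for every `m`. -/
abbrev Qe : QD where
  V := Q.V
  Ar := fun i j => Q.Ar i j ⊕ {m : Fin t // (pM m).2.1 = i ∧ (pM m).1 = j}

/-- The inclusion of paths of `Δ` into paths of the extended quiver. -/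
def embed : {i j : Q.V} → Q.Path i j → (Qe Q t pM).Path i j
  | _, _, QD.Path.nil i => QD.Path.nil (Q := Qe Q t pM) i
  | _, _, QD.Path.cons a p => QD.Path.cons (Q := Qe Q t pM) (Sum.inl a) (embed p)

/-- The number of `y`-arrows occurring in a path of the extended quiver. -/
def numY : {i j : Q.V} → (Qe Q t pM).Path i j → ℕ
  | _, _, QD.Path.nil _ => 0
  | i, _, @QD.Path.cons _ _ j' _ a p =>
      (match (a : Q.Ar i j' ⊕ {m : Fin t // (pM m).2.1 = i ∧ (pM m).1 = j'}) with
        | Sum.inl _ => 0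
        | Sum.inr _ => 1) + numY p

/-- The arrow `y_{p_m}` of the extended quiver. -/
def yArr (m : Fin t) : (Qe Q t pM).Ar (pM m).2.1 (pM m).1 := Sum.inr ⟨m, rfl, rfl⟩

/-- `C` is an `α`-revived cycle of `Δ`. -/
def IsRev {h : Q.V} (C : Q.Path h h) : Prop :=
  ∃ (j : Q.V) (a : Q.Path h j) (b : Q.Path j h),
    0 < a.length ∧ 0 < b.length ∧ cls K Q n PA a ≠ 0 ∧ cls K Q n PA b ≠ 0 ∧
    C = a.comp b ∧ αm (cls K Q n PA a) (cls K Q n PA b) ≠ 0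

/-- `C` is an `α`-revived cycle, viewed inside the extended quiver. -/
def IsRevE {h : Q.V} (C : (Qe Q t pM).Path h h) : Prop :=
  ∃ C₀ : Q.Path h h, C = embed Q t pM C₀ ∧ IsRev K Q n PA αm C₀

/-- `C` is an elementary cycle of weight `wt`. -/
def IsElemW {h : Q.V} (C : (Qe Q t pM).Path h h) (wt : K) : Prop :=
  ∃ (m : Fin t) (δ₂ : Q.Path h (pM m).2.1) (δ₁ : Q.Path (pM m).1 h),
    C = (embed Q t pM δ₂).comp (QD.Path.cons (yArr Q t pM m) (embed Q t pM δ₁)) ∧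
    coordP K Q n PA basA (pM m) (cls K Q n PA (δ₁.comp δ₂)) = wt ∧ wt ≠ 0

/-- `C` is an elementary cycle. -/
def IsElem {h : Q.V} (C : (Qe Q t pM).Path h h) : Prop :=
  ∃ wt : K, IsElemW K Q n PA basA t pM C wt

/-- `C` is a nonzero cycle (elementary or `α`-revived) with weight `wt`. -/
def HasWt {h : Q.V} (C : (Qe Q t pM).Path h h) (wt : K) : Prop :=
  IsElemW K Q n PA basA t pM C wt ∨ (IsRevE K Q n PA αm t pM C ∧ wt = k)

/-- The left action of `A` on `D(A) = Hom_K(A, K)`: `(a · f)(z) = f(z * a)`. -/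
def dL (a : TA K Q n PA) (f : Module.Dual K (TA K Q n PA)) : Module.Dual K (TA K Q n PA) :=
  f ∘ₗ LinearMap.mulRight K a

/-- The right action of `A` on `D(A) = Hom_K(A, K)`: `(f · b)(z) = f(b * z)`. -/
def dR (f : Module.Dual K (TA K Q n PA)) (b : TA K Q n PA) : Module.Dual K (TA K Q n PA) :=
  f ∘ₗ LinearMap.mulLeft K b

variable (T : Type) [Ring T] [Algebra K T]
variable (eT : T ≃ₗ[K] TA K Q n PA × Module.Dual K (TA K Q n PA))
variable (PB : PathAlg K (Qe Q t pM))
variable (Φm : PB.P →ₐ[K] T)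

/-- `φ₁ = π₁ ∘ Φ`. -/
def ph1 (z : PB.P) : TA K Q n PA := (eT (Φm z)).1

/-- `φ₂ = π₂ ∘ Φ`. -/
def ph2 (z : PB.P) : Module.Dual K (TA K Q n PA) := (eT (Φm z)).2

/-- The primitive idempotent of `T` corresponding to a vertex. -/
def eV (i : Q.V) : T := eT.symm (cls K Q n PA (QD.Path.nil i), 0)

end Main

section Extra

variable (K : Type) [Field K] (Q : QD) [Fintype Q.V] [∀ i j : Q.V, Fintype (Q.Ar i j)]
variable (n : ℕ) (PA : PathAlg K Q)
variable (t : ℕ) (pM : Fin t → QD.PathIn Q)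
variable (T : Type) [Ring T] [Algebra K T]
variable (PB : PathAlg K (Qe Q t pM))
variable (Φm : PB.P →ₐ[K] T)

/-- The Jacobson radical of a ring. -/
def JT : Ideal T := Ideal.jacobson ⊥

/-- The Jacobson radical, viewed as a `K`-subspace. -/
def JTK : Submodule K T := Submodule.restrictScalars K (JT T)

/-- The square of the Jacobson radical, as a `K`-subspace. -/
def J2K : Submodule K T := JTK K T * JTK K T

/-- The number of arrows `i → j` in the Gabriel (ordinary) quiver of `T`,
i.e. `dim_K e_i (rad T / rad² T) e_j`. -/
def gabrielCount (ei ej : T) : ℕ :=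
  Module.finrank K
      ↥(Submodule.span K {y : T | ∃ z ∈ JT T, y = ei * z * ej} ⊔ J2K K T)
    - Module.finrank K ↥(J2K K T)

/-- `e` is a primitive idempotent. -/
def IsPrimIdem (e : T) : Prop :=
  e * e = e ∧ e ≠ 0 ∧
  ∀ f g : T, f * f = f → g * g = g → f * g = 0 → g * f = 0 → e = f + g → f = 0 ∨ g = 0

/-- `a` is an arrow of the ring `T` in the sense of Brenner:
`a ∈ rad T \ rad² T` and `a = x a y` for primitive idempotents `x, y`. -/
def IsArrowT (a : T) : Prop :=
  a ∈ JT T ∧ a ∉ J2K K T ∧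
  ∃ e f : T, IsPrimIdem T e ∧ IsPrimIdem T f ∧ a = e * a * f

/-- `rad (T e)`, a left submodule. -/
def radLe (e : T) : Submodule T T := Submodule.span T ((fun z => z * e) '' (JT T : Set T))

/-- `rad (e T)`, a right submodule. -/
def radRe (e : T) : Submodule Tᵐᵒᵖ T := Submodule.span Tᵐᵒᵖ ((fun z => e * z) '' (JT T : Set T))

/-- `Λ` is a complete set of arrows for `rad (T e)`. -/
def CompleteL (e : T) (Λ : Set T) : Prop :=
  (∀ a ∈ Λ, IsArrowT K T a) ∧ Submodule.span T Λ = radLe T e ∧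
  ∀ Λ' ⊂ Λ, Submodule.span T Λ' ≠ radLe T e

/-- `Γ` is a complete set of arrows for `rad (e T)`. -/
def CompleteR (e : T) (Γ : Set T) : Prop :=
  (∀ a ∈ Γ, IsArrowT K T a) ∧ Submodule.span Tᵐᵒᵖ Γ = radRe T e ∧
  ∀ Γ' ⊂ Γ, Submodule.span Tᵐᵒᵖ Γ' ≠ radRe T e

/-- `(N, nn) ∈ 𝒩` in the sense of Brenner, for the primitive idempotent `e`. -/
def mcN (e : T) (N nn : ℕ) : Prop :=
  ∃ Λ Γ : Fin (nn + 1) → Set T,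
    (∀ i : Fin (nn + 1), (i : ℕ) ≠ 0 → (Λ i).Nonempty ∧ (Γ i).Nonempty) ∧
    (∀ i j : Fin (nn + 1), i ≠ j → Λ i ∩ Λ j = ∅ ∧ Γ i ∩ Γ j = ∅) ∧
    CompleteL K T e (⋃ i, Λ i) ∧ CompleteR K T e (⋃ i, Γ i) ∧
    (∀ i j : Fin (nn + 1), (i ≠ j ∨ (i : ℕ) = 0 ∨ (j : ℕ) = 0) →
      ∀ a ∈ Λ i, ∀ b ∈ Γ j, a * b = 0) ∧
    N = nn + (Λ 0).ncard

/-- The set `𝒞_h` of oriented cycles at `h` of the extended quiver that are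
nonzero in the Hochschild extension algebra. -/
def Ch (h : Q.V) : Type :=
  {C : (Qe Q t pM).Path h h // 0 < C.length ∧ Φm (PB.ι C) ≠ 0}

/-- The relation `ℛ` on `𝒞_h`: the two cycles share an arrow which starts or ends at `h`. -/
def Rc (h : Q.V) (C C' : Ch K Q t pM T PB Φm h) : Prop :=
  ∃ (u v : Q.V) (a : (Qe Q t pM).Ar u v), (u = h ∨ v = h) ∧
    QD.Path.arrowMem a C.1 ∧ QD.Path.arrowMem a C'.1

/-- `card (𝒞_h / ≡)`, the number of equivalence classes of `𝒞_h` under the equivalence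
relation generated by `ℛ`. -/
def NCh (h : Q.V) : ℕ := Nat.card (Quot (Rc K Q t pM T PB Φm h))

/-- The set `𝒜_h` of arrows of the extended quiver ending at `h`. -/
def Ah (h : Q.V) : Type := Σ u : Q.V, (Qe Q t pM).Ar u h

/-- The relation `ℛ'` on `𝒜_h`: there is an arrow `b` with `ab ≠ 0 ≠ a'b` in `T_α(A)`. -/
def Ra (h : Q.V) (a a' : Ah Q t pM h) : Prop :=
  ∃ (v : Q.V) (b : (Qe Q t pM).Ar h v),
    Φm (PB.ι (QD.Path.cons a.2 (QD.Path.cons b (QD.Path.nil (Q := Qe Q t pM) v)))) ≠ 0 ∧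
    Φm (PB.ι (QD.Path.cons a'.2 (QD.Path.cons b (QD.Path.nil (Q := Qe Q t pM) v)))) ≠ 0

/-- `card (𝒜_h / ≈)`. -/
def NAh (h : Q.V) : ℕ := Nat.card (Quot (Ra K Q t pM T PB Φm h))

end Extra

/-- An `R`-module is indecomposable if it is nonzero and is not the internal direct
sum of two nonzero submodules. -/
def Indec (R M : Type) [Ring R] [AddCommGroup M] [Module R M] : Prop :=
  (⊥ : Submodule R M) ≠ ⊤ ∧ ∀ p q : Submodule R M, IsCompl p q → p = ⊥ ∨ q = ⊥


section Aux

variable {K : Type} [Field K] {Q : QD} [Fintype Q.V]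
variable {n : ℕ} {PA : PathAlg K Q}
variable {basA : Module.Basis (Short Q n) K (TA K Q n PA)}
variable {αm : TA K Q n PA →ₗ[K] TA K Q n PA →ₗ[K] Module.Dual K (TA K Q n PA)}
variable {t : ℕ} {pM : Fin t → QD.PathIn Q}
variable {T : Type} [Ring T] [Algebra K T]
variable {eT : T ≃ₗ[K] TA K Q n PA × Module.Dual K (TA K Q n PA)}
variable {PB : PathAlg K (Qe Q t pM)}
variable {Φm : PB.P →ₐ[K] T}

lemma cls_comp {i j l : Q.V} (p : Q.Path i j) (q : Q.Path j l) :
    cls K Q n PA (p.comp q) = cls K Q n PA p * cls K Q n PA q := by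
  unfold cls; rw [PA.ι_comp, map_mul]

lemma comp_assoc : ∀ {i j l m : Q.V} (p : Q.Path i j) (q : Q.Path j l) (r : Q.Path l m),
    (p.comp q).comp r = p.comp (q.comp r) := by
  intro i j l m p
  induction p with
  | nil => intro q r; rfl
  | cons a p ih => intro q r; simp [QD.Path.comp, ih]

lemma embed_comp : ∀ {i j l : Q.V} (p : Q.Path i j) (q : Q.Path j l),
    embed Q t pM (p.comp q) = (embed Q t pM p).comp (embed Q t pM q) := by
  intro i j l p
  induction p with
  | nil => intro q; rfl
  | cons a p ih => intro q; simp [QD.Path.comp, embed, ih]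

lemma dL_zero (f : Module.Dual K (TA K Q n PA)) : dL K Q n PA 0 f = 0 := by
  ext z; simp [dL]

lemma dR_zero (f : Module.Dual K (TA K Q n PA)) : dR K Q n PA f 0 = 0 := by
  ext z; simp [dR]

section WithHyp

variable (hTmul : ∀ u v : T, eT (u * v) = ((eT u).1 * (eT v).1,
      dL K Q n PA (eT u).1 (eT v).2 + dR K Q n PA (eT u).2 (eT v).1 + αm (eT u).1 (eT v).1))
variable (hΦnil : ∀ i : Q.V, Φm (PB.ι (QD.Path.nil (Q := Qe Q t pM) i))
      = eT.symm (cls K Q n PA (QD.Path.nil i), 0))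
variable (hΦarr : ∀ {i j : Q.V} (a : Q.Ar i j),
      Φm (PB.ι (QD.Path.cons (Sum.inl a) (QD.Path.nil (Q := Qe Q t pM) j)))
      = eT.symm (cls K Q n PA (QD.Path.cons a (QD.Path.nil j)), 0))
variable (hΦy : ∀ m : Fin t,
      Φm (PB.ι (QD.Path.cons (yArr Q t pM m) (QD.Path.nil (Q := Qe Q t pM) (pM m).1)))
      = eT.symm (0, coordP K Q n PA basA (pM m)))

include hTmul hΦnil hΦarr in
lemma embed_fst : ∀ {i j : Q.V} (δ : Q.Path i j),
    (eT (Φm (PB.ι (embed Q t pM δ)))).1 = cls K Q n PA δ := by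
  intro i j δ
  induction δ with
  | nil i =>
    show (eT (Φm (PB.ι (QD.Path.nil (Q := Qe Q t pM) i)))).1 = _
    rw [hΦnil, eT.apply_symm_apply]
  | cons a p ih =>
    have h1 : PB.ι (embed Q t pM (QD.Path.cons a p))
        = PB.ι (QD.Path.cons (Sum.inl a) (QD.Path.nil (Q := Qe Q t pM) _))
          * PB.ι (embed Q t pM p) := by rw [← PB.ι_comp]; rfl
    rw [h1, map_mul, hTmul, hΦarr, eT.apply_symm_apply]
    show cls K Q n PA (QD.Path.cons a (QD.Path.nil _)) * _ = _
    rw [ih, ← cls_comp]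
    rfl

include hTmul hΦy in
lemma y_eval (m : Fin t) {jj : Q.V} (δ₁ : Q.Path (pM m).1 jj)
    (hf : (eT (Φm (PB.ι (embed Q t pM δ₁)))).1 = cls K Q n PA δ₁) :
    eT (Φm (PB.ι (QD.Path.cons (yArr Q t pM m) (embed Q t pM δ₁))))
      = (0, dR K Q n PA (coordP K Q n PA basA (pM m)) (cls K Q n PA δ₁)) := by
  have h1 : PB.ι (QD.Path.cons (yArr Q t pM m) (embed Q t pM δ₁))
      = PB.ι (QD.Path.cons (yArr Q t pM m) (QD.Path.nil (Q := Qe Q t pM) (pM m).1))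
        * PB.ι (embed Q t pM δ₁) := by rw [← PB.ι_comp]; rfl
  rw [h1, map_mul, hTmul, hΦy, eT.apply_symm_apply, hf]
  refine Prod.ext (by simp) ?_
  simp [dL_zero]

include hTmul hΦnil hΦarr hΦy in
lemma elem_eval (m : Fin t) {ii jj : Q.V} (δ₂ : Q.Path ii (pM m).2.1)
    (δ₁ : Q.Path (pM m).1 jj) :
    eT (Φm (PB.ι ((embed Q t pM δ₂).comp
        (QD.Path.cons (yArr Q t pM m) (embed Q t pM δ₁)))))
      = (0, dL K Q n PA (cls K Q n PA δ₂)
          (dR K Q n PA (coordP K Q n PA basA (pM m)) (cls K Q n PA δ₁))) := by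
  rw [PB.ι_comp, map_mul, hTmul,
    y_eval hTmul hΦy m δ₁ (embed_fst hTmul hΦnil hΦarr δ₁),
    embed_fst hTmul hΦnil hΦarr δ₂]
  refine Prod.ext (by simp) ?_
  simp [dR_zero]

include hTmul hΦnil hΦarr hΦy in
lemma fst_zero : ∀ {i j : (Qe Q t pM).V} (z : (Qe Q t pM).Path i j), 1 ≤ numY Q t pM z →
    (eT (Φm (PB.ι z))).1 = 0 := by
  intro i j z
  induction z with
  | nil => intro h; simp [numY] at h
  | cons a p ih =>
    intro h
    have h1 : PB.ι (QD.Path.cons a p)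
        = PB.ι (QD.Path.cons a (QD.Path.nil (Q := Qe Q t pM) _)) * PB.ι p := by
      rw [← PB.ι_comp]; rfl
    rw [h1, map_mul, hTmul]
    cases a with
    | inl a₀ =>
      have hp : 1 ≤ numY Q t pM p := by simpa [numY] using h
      show _ * (eT (Φm (PB.ι p))).1 = 0
      rw [ih hp, mul_zero]
    | inr ym =>
      obtain ⟨m, h1', h2'⟩ := ym
      subst h1'; subst h2'
      show (eT (Φm (PB.ι (QD.Path.cons (yArr Q t pM m)
        (QD.Path.nil (Q := Qe Q t pM) (pM m).1))))).1 * _ = 0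
      rw [hΦy, eT.apply_symm_apply]
      exact zero_mul _

include hTmul hΦnil hΦarr hΦy in
lemma phi_two : ∀ {i j : (Qe Q t pM).V} (z : (Qe Q t pM).Path i j), 2 ≤ numY Q t pM z →
    Φm (PB.ι z) = 0 := by
  intro i j z
  induction z with
  | nil => intro h; simp [numY] at h
  | cons a p ih =>
    intro h
    have h1 : PB.ι (QD.Path.cons a p)
        = PB.ι (QD.Path.cons a (QD.Path.nil (Q := Qe Q t pM) _)) * PB.ι p := by
      rw [← PB.ι_comp]; rfl
    cases a with
    | inl a₀ =>
      have hp : 2 ≤ numY Q t pM p := by simpa [numY] using h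
      rw [h1, map_mul, ih hp, mul_zero]
    | inr ym =>
      obtain ⟨m, h1', h2'⟩ := ym
      subst h1'; subst h2'
      have hp : 1 ≤ numY Q t pM p := by
        have hh : (1 : ℕ) + numY Q t pM p ≥ 2 := by simpa [numY] using h
        omega
      clear h1
      show Φm (PB.ι (QD.Path.cons (yArr Q t pM m) p)) = 0
      have h1 : PB.ι (QD.Path.cons (yArr Q t pM m) p)
          = PB.ι (QD.Path.cons (yArr Q t pM m) (QD.Path.nil (Q := Qe Q t pM) (pM m).1))
            * PB.ι p := by rw [← PB.ι_comp]; rfl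
      apply eT.injective
      rw [h1, map_mul, hTmul, map_zero, hΦy, eT.apply_symm_apply,
        fst_zero hTmul hΦnil hΦarr hΦy p hp]
      refine Prod.ext (by simp) ?_
      simp [dL_zero, dR_zero]

lemma decomp0 : ∀ {i j : (Qe Q t pM).V} (z : (Qe Q t pM).Path i j), numY Q t pM z = 0 →
    ∃ δ : Q.Path i j, z = embed Q t pM δ := by
  intro i j z
  induction z with
  | nil i => intro _; exact ⟨QD.Path.nil (Q := Q) i, rfl⟩
  | cons a p ih =>
    intro h
    cases a with
    | inl a₀ =>
      have hp : numY Q t pM p = 0 := by simpa [numY] using h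
      obtain ⟨δ, rfl⟩ := ih hp
      exact ⟨QD.Path.cons a₀ δ, rfl⟩
    | inr ym => simp [numY] at h

lemma decomp1 : ∀ {i j : (Qe Q t pM).V} (z : (Qe Q t pM).Path i j), numY Q t pM z = 1 →
    ∃ (m : Fin t) (δ₂ : Q.Path i (pM m).2.1) (δ₁ : Q.Path (pM m).1 j),
      z = (embed Q t pM δ₂).comp (QD.Path.cons (yArr Q t pM m) (embed Q t pM δ₁)) := by
  intro i j z
  induction z with
  | nil => intro h; simp [numY] at h
  | cons a p ih =>
    intro h
    cases a with
    | inl a₀ =>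
      have hp : numY Q t pM p = 1 := by simpa [numY] using h
      obtain ⟨m, δ₂, δ₁, rfl⟩ := ih hp
      exact ⟨m, QD.Path.cons a₀ δ₂, δ₁, rfl⟩
    | inr ym =>
      obtain ⟨m, h1, h2⟩ := ym
      subst h1; subst h2
      have hp : numY Q t pM p = 0 := by simpa [numY] using h
      obtain ⟨δ, rfl⟩ := decomp0 p hp
      exact ⟨m, QD.Path.nil _, δ, rfl⟩

end WithHyp

end Aux

section Statements

variable (K : Type) [Field K] (Q : QD) [Fintype Q.V] [∀ i j : Q.V, Fintype (Q.Ar i j)]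
variable (n : ℕ) (PA : PathAlg K Q)
variable (basA : Module.Basis (Short Q n) K (TA K Q n PA))
variable (s : ℕ) [NeZero s] (w : ZMod s → Q.V) (x : ∀ i : ZMod s, Q.Ar (w i) (w (i + 1)))
variable (k : K)
variable (αm : TA K Q n PA →ₗ[K] TA K Q n PA →ₗ[K] Module.Dual K (TA K Q n PA))
variable (t : ℕ) (pM : Fin t → QD.PathIn Q)
variable (T : Type) [Ring T] [Algebra K T]
variable (eT : T ≃ₗ[K] TA K Q n PA × Module.Dual K (TA K Q n PA))
variable (PB : PathAlg K (Qe Q t pM))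
variable (Φm : PB.P →ₐ[K] T)

/-- if `u` is a path of `KΔ`, `z` a path lying in `Y` and `φ₂(z)(ū) ≠ 0`,
then `u` is a supplement of `z`, i.e. `zu` is an elementary cycle. -/
theorem stmt10
    [IsAlgClosed K]
    (hn : 2 ≤ n)
    (hdim : 1 < Module.finrank K (TA K Q n PA))
    (hconn : ∀ i j : Q.V,
      Relation.EqvGen (fun u v : Q.V => Nonempty (Q.Ar u v) ∨ Nonempty (Q.Ar v u)) i j)
    (hcyc : ∀ (i : Q.V) (p : Q.Path i i), 0 < p.length → cls K Q n PA p = 0)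
    (hbas : ∀ sp : Short Q n, basA sp = cls K Q n PA sp.1.2.2)
    (hs1 : n + 1 ≤ s) (hs2 : s ≤ 2 * n - 2)
    (hk : k ≠ 0)
    (hα : ∀ {i j l : Q.V} (a : Q.Path i j) (b : Q.Path j l),
      αm (cls K Q n PA a) (cls K Q n PA b) =
        k • ∑ r : ZMod s, aTerm K Q n PA basA s w x a b r)
    (hcoc : ∀ a b c : TA K Q n PA,
      dL K Q n PA a (αm b c) + αm a (b * c) = αm (a * b) c + dR K Q n PA (αm a b) c)
    (hMlt : ∀ m : Fin t, (pM m).2.2.length < n)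
    (hMli : LinearIndependent K fun m : Fin t => cls K Q n PA (pM m).2.2)
    (hMsp : Submodule.span K (Set.range fun m : Fin t => cls K Q n PA (pM m).2.2)
      = socA K Q n PA)
    (hTmul : ∀ u v : T, eT (u * v) = ((eT u).1 * (eT v).1,
      dL K Q n PA (eT u).1 (eT v).2 + dR K Q n PA (eT u).2 (eT v).1 + αm (eT u).1 (eT v).1))
    (hTone : eT 1 = (1, 0))
    (hΦnil : ∀ i : Q.V, Φm (PB.ι (QD.Path.nil (Q := Qe Q t pM) i))
      = eT.symm (cls K Q n PA (QD.Path.nil i), 0))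
    (hΦarr : ∀ {i j : Q.V} (a : Q.Ar i j),
      Φm (PB.ι (QD.Path.cons (Sum.inl a) (QD.Path.nil (Q := Qe Q t pM) j)))
      = eT.symm (cls K Q n PA (QD.Path.cons a (QD.Path.nil j)), 0))
    (hΦy : ∀ m : Fin t,
      Φm (PB.ι (QD.Path.cons (yArr Q t pM m) (QD.Path.nil (Q := Qe Q t pM) (pM m).1)))
      = eT.symm (0, coordP K Q n PA basA (pM m)))
    (hΦsurj : Function.Surjective Φm)
    {a b : Q.V} (z : (Qe Q t pM).Path a b) (u : Q.Path b a)
    (hz : 1 ≤ numY Q t pM z)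
    (hne : ph2 K Q n PA t pM T eT PB Φm (PB.ι z) (cls K Q n PA u) ≠ 0) :
    IsElem K Q n PA basA t pM (z.comp (embed Q t pM u)) := by
  rcases Nat.lt_or_ge (numY Q t pM z) 2 with hlt | hge
  · -- numY z = 1
    have h1 : numY Q t pM z = 1 := by omega
    obtain ⟨m, δ₂, δ₁, rfl⟩ := decomp1 z h1
    have hev := elem_eval (basA := basA) hTmul hΦnil (fun {i j} a => hΦarr a) hΦy m δ₂ δ₁
    have hval : ph2 K Q n PA t pM T eT PB Φm
        (PB.ι ((embed Q t pM δ₂).comp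
          (QD.Path.cons (yArr Q t pM m) (embed Q t pM δ₁)))) (cls K Q n PA u)
        = coordP K Q n PA basA (pM m) (cls K Q n PA ((δ₁.comp u).comp δ₂)) := by
      unfold ph2
      rw [hev]
      show coordP K Q n PA basA (pM m)
        (cls K Q n PA δ₁ * (cls K Q n PA u * cls K Q n PA δ₂)) = _
      rw [cls_comp, cls_comp, mul_assoc]
    rw [hval] at hne
    refine ⟨coordP K Q n PA basA (pM m) (cls K Q n PA ((δ₁.comp u).comp δ₂)),
      m, δ₂, δ₁.comp u, ?_, rfl, hne⟩
    rw [comp_assoc, embed_comp]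
    rfl
  · -- numY z ≥ 2 : contradiction
    exfalso
    apply hne
    unfold ph2
    rw [phi_two (basA := basA) hTmul hΦnil (fun {i j} a => hΦarr a) hΦy z hge, map_zero]
    rfl

end Statements
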